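/- arXiv:0808.2158 — 10 statements merged into one kernel-verified Lean document; each statement's English description precedes it below -/
import Mathlib

section
/- Let V be a finite-dimensional real inner product space and φ an alternating p-form on V. If ξ = e₁∧⋯∧e_p is an orthonormal decomposable p-vector, then ξ is a critical point of the function φ on the set of unit decomposable p-vectors if and only if for every v orthogonal to span{e₁,…,e_p}, the interior product v⌟φ vanishes on span{e₁,…,e_p} (i.e. φ(e₁,…,e_{a-1}, v, e_{a+1},…,e_p) = 0 for all 1 ≤ a ≤ p). -/
open scoped RealInnerProductSpace

/-- Any multilinear map on a finite-dimensional space is (equal to) a continuous one. -/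
lemma exists_continuousMultilinearMap_eq
    {V : Type*} [NormedAddCommGroup V] [NormedSpace ℝ V] [FiniteDimensional ℝ V]
    {p : ℕ} (φ : MultilinearMap ℝ (fun _ : Fin p => V) ℝ) :
    ∃ F : ContinuousMultilinearMap ℝ (fun _ : Fin p => V) ℝ, ⇑F = ⇑φ := by
  classical
  set b := Module.finBasis ℝ V with hb
  refine ⟨∑ k : Fin p → Fin (Module.finrank ℝ V), φ (fun i => b (k i)) •
      ((ContinuousMultilinearMap.mkPiAlgebra ℝ (Fin p) ℝ).compContinuousLinearMap
        (fun i => LinearMap.toContinuousLinearMap (b.coord (k i)))), ?_⟩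
  funext m
  have hm : m = fun i => ∑ j, b.repr (m i) j • b j := by
    funext i; exact (b.sum_repr (m i)).symm
  have h1 : φ m = ∑ k : Fin p → Fin (Module.finrank ℝ V),
      (∏ i, b.repr (m i) (k i)) • φ (fun i => b (k i)) := by
    conv_lhs => rw [hm]
    rw [φ.map_sum]
    exact Finset.sum_congr rfl fun k _ => φ.map_smul_univ _ _
  simp only [ContinuousMultilinearMap.sum_apply, ContinuousMultilinearMap.smul_apply,
    ContinuousMultilinearMap.compContinuousLinearMap_apply,
    ContinuousMultilinearMap.mkPiAlgebra_apply, LinearMap.coe_toContinuousLinearMap',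
    Module.Basis.coord_apply, h1]
  exact Finset.sum_congr rfl fun k _ => by
    simp [smul_eq_mul]; ring

/-- **First Cousin Principle** (Lemma 2.1 / Lemma `cp1`).
An orthonormal decomposable `p`-vector `ξ = e₁ ∧ ⋯ ∧ e_p` is a critical point of the
function induced by the alternating `p`-form `φ` on the set of unit decomposable
`p`-vectors (criticality expressed via smooth curves of orthonormal frames through `e`)
if and only if for every `v` orthogonal to `span{e₁, …, e_p}` the interior product
`v ⌟ φ` vanishes on the span, i.e. `φ(e₁, …, e_{a-1}, v, e_{a+1}, …, e_p) = 0` for all `a`. -/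
theorem first_cousin_principle
    {V : Type*} [NormedAddCommGroup V] [InnerProductSpace ℝ V] [FiniteDimensional ℝ V]
    {p : ℕ} (φ : AlternatingMap ℝ V ℝ (Fin p)) (e : Fin p → V) (he : Orthonormal ℝ e) :
    (∀ c : ℝ → (Fin p → V), ContDiff ℝ (⊤ : ℕ∞) c → (∀ t, Orthonormal ℝ (c t)) → c 0 = e →
      deriv (fun t => φ (c t)) 0 = 0)
    ↔ (∀ v : V, (∀ i, ⟪v, e i⟫ = 0) → ∀ a : Fin p, φ (Function.update e a v) = 0) := by
  classical
  obtain ⟨F, hF⟩ := exists_continuousMultilinearMap_eq φ.toMultilinearMap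
  have hFφ : ∀ m, F m = φ m := fun m => by rw [hF]; rfl
  have he' : ∀ i j, ⟪e i, e j⟫ = if i = j then 1 else 0 := orthonormal_iff_ite.1 he
  constructor
  · intro H v hv a
    by_cases hv0 : v = 0
    · simp [hv0]
    · set u : V := ‖v‖⁻¹ • v with hu
      have hvnorm : ‖v‖ ≠ 0 := norm_ne_zero_iff.mpr hv0
      have hunorm : ‖u‖ = 1 := by
        rw [hu, norm_smul]; simp [abs_of_nonneg (inv_nonneg.mpr (norm_nonneg v)),
          inv_mul_cancel₀ hvnorm]
      have huv : ∀ i, ⟪u, e i⟫ = 0 := fun i => by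
        rw [hu, real_inner_smul_left, hv i, mul_zero]
      have huu : ⟪u, u⟫ = 1 := by
        rw [real_inner_self_eq_norm_sq, hunorm]; norm_num
      set c : ℝ → (Fin p → V) := fun t =>
        Function.update e a (Real.cos t • e a + Real.sin t • u) with hc
      have hc_cd : ContDiff ℝ (⊤ : ℕ∞) c := by
        rw [contDiff_pi]
        intro i
        by_cases hia : i = a
        · subst hia
          simp only [hc, Function.update_self]
          exact (Real.contDiff_cos.smul contDiff_const).add
            (Real.contDiff_sin.smul contDiff_const)
        · simp only [hc, Function.update_of_ne hia]
          exact contDiff_const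
      have hc_on : ∀ t, Orthonormal ℝ (c t) := by
        intro t
        rw [orthonormal_iff_ite]
        intro i j
        have h2 : ⟪e a, u⟫ = 0 := by rw [real_inner_comm]; exact huv a
        by_cases hia : i = a <;> by_cases hja : j = a
        · rw [hia, hja]
          simp only [hc, Function.update_self, inner_add_add_self, real_inner_smul_left,
            real_inner_smul_right]
          rw [he' a a, huu, huv a, h2]
          simp
          nlinarith [Real.sin_sq_add_cos_sq t]
        · rw [hia]
          simp only [hc, Function.update_self, Function.update_of_ne hja,
            inner_add_left, real_inner_smul_left]
          rw [he' a j, huv j]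
          simp [if_neg (fun h : a = j => hja h.symm), hja]
        · rw [hja]
          have h3 : ⟪e i, u⟫ = 0 := by rw [real_inner_comm]; exact huv i
          simp only [hc, Function.update_self, Function.update_of_ne hia,
            inner_add_right, real_inner_smul_right]
          rw [he' i a, h3]
          simp [hia]
        · simp only [hc, Function.update_of_ne hia, Function.update_of_ne hja]
          exact he' i j
      have hc0 : c 0 = e := by
        simp [hc, Real.cos_zero, Real.sin_zero]
      have hderiv : HasDerivAt c (Function.update (fun _ : Fin p => (0 : V)) a u) 0 := by
        rw [hasDerivAt_pi]
        intro i
        by_cases hia : i = a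
        · rw [hia]
          simp only [hc, Function.update_self]
          have h1 := ((Real.hasDerivAt_cos 0).smul_const (e a)).add
            ((Real.hasDerivAt_sin 0).smul_const u)
          simpa [Pi.add_def] using h1
        · simp only [hc, Function.update_of_ne hia]
          exact hasDerivAt_const 0 _
      have hcomp : HasDerivAt (fun t => φ (c t))
          (F.linearDeriv (c 0) (Function.update (fun _ : Fin p => (0 : V)) a u)) 0 := by
        have h := (F.hasFDerivAt (x := c 0)).comp_hasDerivAt 0 hderiv
        have heq : (fun t => (φ (c t) : ℝ)) = (⇑F ∘ c) := funext fun t => (hFφ (c t)).symm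
        rw [heq]; exact h
      have hval : F.linearDeriv (c 0) (Function.update (fun _ : Fin p => (0 : V)) a u)
          = φ (Function.update e a u) := by
        rw [ContinuousMultilinearMap.linearDeriv_apply, hc0]
        rw [Finset.sum_eq_single a]
        · rw [Function.update_self, hFφ]
        · intro b _ hba
          rw [Function.update_of_ne hba, hFφ]
          simp
        · simp
      have h0 : φ (Function.update e a u) = 0 := by
        have := H c hc_cd hc_on hc0
        rw [hcomp.deriv] at this
        rwa [hval] at this
      have hvu : v = ‖v‖ • u := by rw [hu, smul_smul, mul_inv_cancel₀ hvnorm, one_smul]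
      rw [hvu, AlternatingMap.map_update_smul, h0, smul_zero]
  · intro H c hc hon hc0
    set w : Fin p → V := deriv c 0 with hw
    have hcd : HasDerivAt c w 0 :=
      ((hc.differentiable (by simp)) 0).hasDerivAt
    have hca : ∀ a, HasDerivAt (fun t => c t a) (w a) 0 := hasDerivAt_pi.1 hcd
    have hcomp : HasDerivAt (fun t => φ (c t)) (F.linearDeriv (c 0) w) 0 := by
      have h := (F.hasFDerivAt (x := c 0)).comp_hasDerivAt 0 hcd
      have heq : (fun t => (φ (c t) : ℝ)) = (⇑F ∘ c) := funext fun t => (hFφ (c t)).symm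
      rw [heq]; exact h
    rw [hcomp.deriv]
    rw [ContinuousMultilinearMap.linearDeriv_apply]
    apply Finset.sum_eq_zero
    intro a _
    rw [hFφ, hc0]
    -- ⟪w a, e a⟫ = 0
    have hwaea : ⟪w a, e a⟫ = 0 := by
      have hg : HasDerivAt (fun t => ⟪c t a, c t a⟫)
          (⟪c 0 a, w a⟫ + ⟪w a, c 0 a⟫) 0 := (hca a).inner ℝ (hca a)
      have hconst : (fun t => ⟪c t a, c t a⟫) = fun _ => (1 : ℝ) := by
        funext t
        have := (hon t).1 a
        rw [real_inner_self_eq_norm_sq, this]; norm_num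
      rw [hconst] at hg
      have hzero : ⟪c 0 a, w a⟫ + ⟪w a, c 0 a⟫ = 0 := by
        have h := hg.deriv
        simp only [deriv_const] at h
        exact h.symm
      rw [hc0] at hzero
      have hcomm : ⟪w a, e a⟫ = ⟪e a, w a⟫ := real_inner_comm _ _
      linarith
    -- decompose w a
    set s : V := ∑ b, ⟪w a, e b⟫ • e b with hs
    set n : V := w a - s with hn
    have hne : ∀ i, ⟪n, e i⟫ = 0 := by
      intro i
      rw [hn, inner_sub_left, hs, sum_inner]
      have : ∑ b, ⟪⟪w a, e b⟫ • e b, e i⟫ = ⟪w a, e i⟫ := by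
        rw [Finset.sum_eq_single i]
        · rw [real_inner_smul_left, he' i i]; simp
        · intro b _ hbi
          rw [real_inner_smul_left, he' b i, if_neg hbi, mul_zero]
        · simp
      rw [this, sub_self]
    have hwa : w a = s + n := by rw [hn]; abel
    rw [hwa, AlternatingMap.map_update_add]
    have h2 : φ (Function.update e a n) = 0 := H n hne a
    have h1 : φ (Function.update e a s) = 0 := by
      have hsum : φ (Function.update e a s)
          = ∑ b, φ (Function.update e a (⟪w a, e b⟫ • e b)) :=
        φ.toMultilinearMap.map_update_sum Finset.univ a (fun b => ⟪w a, e b⟫ • e b) e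
      rw [hsum]
      apply Finset.sum_eq_zero
      intro b _
      show φ (Function.update e a (⟪w a, e b⟫ • e b)) = 0
      rw [AlternatingMap.map_update_smul]
      by_cases hba : b = a
      · subst hba
        rw [Function.update_eq_self, hwaea, zero_smul]
      · have : φ (Function.update e a (e b)) = 0 := by
          apply φ.map_eq_zero_of_eq _ (i := a) (j := b)
          · rw [Function.update_self, Function.update_of_ne hba]
          · exact fun h => hba h.symm
        rw [this, smul_zero]
    rw [h1, h2, add_zero]
end

section
/- Let 𝔤 be a compact simple real Lie algebra with invariant inner product ⟨·,·⟩, and define the Cartan 3-form φ(u,v,w) = c⟨u,[v,w]⟩ for a nonzero constant c. Then an oriented 3-plane ξ = e₁∧e₂∧e₃ (with e₁,e₂,e₃ orthonormal) is a critical point of φ on Gr_o(3,𝔤) if and only if span{e₁,e₂,e₃} is a Lie subalgebra of 𝔤. -/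
open scoped RealInnerProductSpace

/-- **Proposition (3-dimensional subalgebras).**  Let `𝔤` be a real Lie algebra, realized as a
finite-dimensional real inner product space `V` with a Lie bracket `b` (bilinear, alternating,
satisfying the Jacobi identity) whose inner product is invariant: `⟪b u v, w⟫ = ⟪u, b v w⟫`.
Let `φ(u,v,w) = c ⟪u, b v w⟫` be the Cartan 3-form, `c ≠ 0`.  An oriented 3-plane
`ξ = e₁ ∧ e₂ ∧ e₃` (with `e₁,e₂,e₃` orthonormal) is a critical point of `φ` on `Gr_o(3,𝔤)`
(equivalently, by the First Cousin Principle, `(v ⌟ φ)` vanishes on `span{e₁,e₂,e₃}` for every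
`v` orthogonal to the span) if and only if `span{e₁,e₂,e₃}` is a Lie subalgebra of `𝔤`. -/
theorem cartan_three_form_critical_iff_subalgebra
    {V : Type*} [NormedAddCommGroup V] [InnerProductSpace ℝ V] [FiniteDimensional ℝ V]
    (b : V →ₗ[ℝ] V →ₗ[ℝ] V)
    (halt : ∀ u : V, b u u = 0)
    (hjac : ∀ u v w : V, b u (b v w) = b (b u v) w + b v (b u w))
    (hinv : ∀ u v w : V, ⟪b u v, w⟫ = ⟪u, b v w⟫)
    (c : ℝ) (hc : c ≠ 0)
    (e : Fin 3 → V) (he : Orthonormal ℝ e) :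
    (∀ v : V, (∀ i, ⟪v, e i⟫ = 0) → ∀ a : Fin 3,
        (fun w : Fin 3 → V => c * ⟪w 0, b (w 1) (w 2)⟫) (Function.update e a v) = 0)
    ↔ (∀ x y : V, x ∈ Submodule.span ℝ (Set.range e) → y ∈ Submodule.span ℝ (Set.range e) →
        b x y ∈ Submodule.span ℝ (Set.range e)) := by
  classical
  set S := Submodule.span ℝ (Set.range e) with hS
  have hmemS : ∀ i, e i ∈ S := fun i => Submodule.subset_span ⟨i, rfl⟩
  have hanti : ∀ u v : V, b u v = - b v u := by
    intro u v
    have h := halt (u + v)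
    simp only [map_add, LinearMap.add_apply, halt, zero_add, add_zero] at h
    exact eq_neg_of_add_eq_zero_right h
  have hvS : ∀ v : V, (∀ i, ⟪v, e i⟫ = 0) → ∀ s ∈ S, ⟪v, s⟫ = 0 := by
    intro v hv s hs
    induction hs using Submodule.span_induction with
    | mem x hx => obtain ⟨i, rfl⟩ := hx; exact hv i
    | zero => simp
    | add x y _ _ hx hy => rw [inner_add_right, hx, hy, add_zero]
    | smul a x _ hx => rw [real_inner_smul_right, hx, mul_zero]
  constructor
  · intro hcrit
    have key : ∀ i j : Fin 3, b (e i) (e j) ∈ S := by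
      have main : ∀ i j : Fin 3, ∀ v : V, (∀ k, ⟪v, e k⟫ = 0) → ⟪v, b (e i) (e j)⟫ = 0 := by
        intro i j v hv
        have h0 := hcrit v hv 0
        have h1 := hcrit v hv 1
        have h2 := hcrit v hv 2
        simp only [Function.update_self, Function.update_of_ne (by decide : (0:Fin 3) ≠ 1),
          Function.update_of_ne (by decide : (0:Fin 3) ≠ 2),
          Function.update_of_ne (by decide : (1:Fin 3) ≠ 0),
          Function.update_of_ne (by decide : (1:Fin 3) ≠ 2),
          Function.update_of_ne (by decide : (2:Fin 3) ≠ 0),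
          Function.update_of_ne (by decide : (2:Fin 3) ≠ 1)] at h0 h1 h2
        have h0' : ⟪v, b (e 1) (e 2)⟫ = 0 := by
          rcases mul_eq_zero.mp h0 with h | h
          · exact absurd h hc
          · exact h
        have h1' : ⟪v, b (e 0) (e 2)⟫ = 0 := by
          rcases mul_eq_zero.mp h1 with h | h
          · exact absurd h hc
          have : ⟪e 0, b v (e 2)⟫ = - ⟪v, b (e 0) (e 2)⟫ := by
            rw [hanti v (e 2), inner_neg_right, ← hinv, real_inner_comm]
          rw [this] at h
          linarith
        have h2' : ⟪v, b (e 0) (e 1)⟫ = 0 := by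
          rcases mul_eq_zero.mp h2 with h | h
          · exact absurd h hc
          have : ⟪e 0, b (e 1) v⟫ = ⟪v, b (e 0) (e 1)⟫ := by
            rw [← hinv, real_inner_comm]
          rw [this] at h
          exact h
        have hswap : ∀ p q : Fin 3, ⟪v, b (e p) (e q)⟫ = - ⟪v, b (e q) (e p)⟫ := by
          intro p q
          rw [hanti (e p) (e q), inner_neg_right]
        fin_cases i <;> fin_cases j <;>
          simp only [Fin.zero_eta, Fin.mk_one, Fin.reduceFinMk] <;>
          first
            | simp [halt]
            | exact h0'
            | exact h1'
            | exact h2'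
            | (rw [hswap]; simp [h0', h1', h2'])
      intro i j
      have hSS : b (e i) (e j) ∈ Sᗮᗮ := by
        intro v hv
        have hv' : ∀ k, ⟪v, e k⟫ = 0 := fun k => by
          have := hv (e k) (hmemS k)
          rwa [real_inner_comm] at this
        exact main i j v hv'
      rwa [Submodule.orthogonal_orthogonal] at hSS
    intro x y hx hy
    induction hx using Submodule.span_induction with
    | mem u hu =>
        obtain ⟨i, rfl⟩ := hu
        induction hy using Submodule.span_induction with
        | mem w hw => obtain ⟨j, rfl⟩ := hw; exact key i j
        | zero => simp
        | add p q _ _ hp hq => rw [map_add]; exact S.add_mem hp hq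
        | smul a p _ hp => rw [map_smul]; exact S.smul_mem a hp
    | zero => simp
    | add p q _ _ hp hq =>
        rw [map_add, LinearMap.add_apply]; exact S.add_mem hp hq
    | smul a p _ hp =>
        rw [map_smul, LinearMap.smul_apply]; exact S.smul_mem a hp
  · intro hsub v hv a
    have hb : ∀ i j : Fin 3, b (e i) (e j) ∈ S := fun i j => hsub _ _ (hmemS i) (hmemS j)
    fin_cases a <;>
      simp only [Fin.zero_eta, Fin.mk_one, Fin.reduceFinMk, Function.update_self, Function.update_of_ne (by decide : (0:Fin 3) ≠ 1),
        Function.update_of_ne (by decide : (0:Fin 3) ≠ 2),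
        Function.update_of_ne (by decide : (1:Fin 3) ≠ 0),
        Function.update_of_ne (by decide : (1:Fin 3) ≠ 2),
        Function.update_of_ne (by decide : (2:Fin 3) ≠ 0),
        Function.update_of_ne (by decide : (2:Fin 3) ≠ 1)]
    · rw [hvS v hv _ (hb 1 2), mul_zero]
    · have : ⟪e 0, b v (e 2)⟫ = - ⟪v, b (e 0) (e 2)⟫ := by
        rw [hanti v (e 2), inner_neg_right, ← hinv, real_inner_comm]
      rw [this, hvS v hv _ (hb 0 2)]
      ring
    · have : ⟪e 0, b (e 1) v⟫ = ⟪v, b (e 0) (e 1)⟫ := by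
        rw [← hinv, real_inner_comm]
      rw [this, hvS v hv _ (hb 0 1), mul_zero]
end

section
/- Let φ ∈ Λ^p V* and define the alternating (p-1)-fold vector product ρ: V^{p-1} → V by ⟨u, ρ(v₂,…,v_p)⟩ = φ(u,v₂,…,v_p). Then a unit decomposable p-vector ξ = e₁∧⋯∧e_p ∈ Gr_o(p,V) is a critical point of φ on Gr_o(p,V) if and only if the p-plane span{e₁,…,e_p} is closed under ρ (i.e., ρ(v₂,…,v_p) ∈ span{e₁,…,e_p} whenever v₂,…,v_p ∈ span{e₁,…,e_p}). -/
open scoped RealInnerProductSpace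

/-- **Proposition (product version).**  Let `φ ∈ Λ^{q+1} V*` and let
`ρ : V^q → V` be the alternating `q`-fold vector product defined by
`⟪u, ρ(v₂,…,v_p)⟫ = φ(u, v₂, …, v_p)`.  A unit decomposable `(q+1)`-vector
`ξ = e₁ ∧ ⋯ ∧ e_p` (orthonormal `e`) is a critical point of `φ` on `Gr_o(p,V)`
(equivalently, by the First Cousin Principle, `(v ⌟ φ)|_ξ = 0` for all `v ⊥ ξ`)
if and only if the plane `span{e₁,…,e_p}` is closed under `ρ`. -/
theorem critical_iff_rho_closed
    {V : Type*} [NormedAddCommGroup V] [InnerProductSpace ℝ V] [FiniteDimensional ℝ V]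
    {q : ℕ} (φ : AlternatingMap ℝ V ℝ (Fin (q + 1)))
    (ρ : (Fin q → V) → V)
    (hρ : ∀ (u : V) (vs : Fin q → V), ⟪u, ρ vs⟫ = φ (Fin.cons u vs))
    (e : Fin (q + 1) → V) (he : Orthonormal ℝ e) :
    (∀ v : V, (∀ i, ⟪v, e i⟫ = 0) → ∀ a : Fin (q + 1), φ (Function.update e a v) = 0)
    ↔ (∀ vs : Fin q → V, (∀ i, vs i ∈ Submodule.span ℝ (Set.range e)) →
        ρ vs ∈ Submodule.span ℝ (Set.range e)) := by
  classical
  set U : Submodule ℝ V := Submodule.span ℝ (Set.range e) with hU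
  -- membership in the orthogonal complement in terms of the generators
  have hmemo : ∀ v : V, v ∈ Uᗮ ↔ ∀ i, ⟪v, e i⟫ = 0 := by
    intro v
    rw [Submodule.mem_orthogonal']
    constructor
    · intro h i; exact h _ (Submodule.subset_span ⟨i, rfl⟩)
    · intro h u hu
      induction hu using Submodule.span_induction with
      | mem x hx => obtain ⟨i, rfl⟩ := hx; exact h i
      | zero => simp
      | add x y _ _ hx hy => rw [inner_add_right, hx, hy, add_zero]
      | smul c x _ hx => rw [inner_smul_right, hx, mul_zero]
  -- key: if the criticality condition holds at `v ⊥ U`, then `φ (v, e_{j 1}, …) = 0`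
  have key : ∀ v : V, (∀ i, ⟪v, e i⟫ = 0) →
      (∀ a : Fin (q + 1), φ (Function.update e a v) = 0) →
      ∀ j : Fin q → Fin (q + 1), φ (Fin.cons v (fun i => e (j i))) = 0 := by
    intro v hv hcrit j
    by_cases hinj : Function.Injective j
    · -- pick an index missed by `j`
      have hns : ¬ Function.Surjective j := by
        intro hs
        have := Fintype.card_le_of_surjective j hs
        simp at this
      rw [Function.Surjective] at hns
      push_neg at hns
      obtain ⟨a, ha⟩ := hns
      -- build the permutation `σ = Fin.cons a j`
      have hσinj : Function.Injective (Fin.cons a j : Fin (q + 1) → Fin (q + 1)) := by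
        intro x y hxy
        induction x using Fin.cases with
        | zero =>
          induction y using Fin.cases with
          | zero => rfl
          | succ y =>
            exact absurd hxy.symm (by simpa using ha y)
        | succ x =>
          induction y using Fin.cases with
          | zero => exact absurd hxy (by simpa using ha x)
          | succ y =>
            simp only [Fin.cons_succ] at hxy
            exact congrArg Fin.succ (hinj hxy)
      let σ : Equiv.Perm (Fin (q + 1)) :=
        Equiv.ofBijective _ (Finite.injective_iff_bijective.mp hσinj)
      have hcomp : Fin.cons v (fun i => e (j i)) = (Function.update e a v) ∘ σ := by
        funext x
        induction x using Fin.cases with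
        | zero =>
          show (Fin.cons v (fun i => e (j i)) : Fin (q+1) → V) 0 = (Function.update e a v ∘ σ) 0
          rw [Function.comp_apply, show σ 0 = a from rfl, Fin.cons_zero, Function.update_self]
        | succ x =>
          show (Fin.cons v (fun i => e (j i)) : Fin (q+1) → V) x.succ = (Function.update e a v ∘ σ) x.succ
          rw [Function.comp_apply, show σ x.succ = j x from rfl, Fin.cons_succ, Function.update_of_ne (ha x)]
      rw [hcomp, φ.map_perm, hcrit a, smul_zero]
    · rw [Function.Injective] at hinj
      push_neg at hinj
      obtain ⟨x, y, hxy, hne⟩ := hinj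
      refine φ.map_eq_zero_of_eq _ (i := x.succ) (j := y.succ) ?_ (by simpa using hne)
      simp [Fin.cons_succ, hxy]
  -- key2: the multilinear expansion
  have key2 : ∀ v : V, (∀ i, ⟪v, e i⟫ = 0) →
      (∀ a : Fin (q + 1), φ (Function.update e a v) = 0) →
      ∀ vs : Fin q → V, (∀ i, vs i ∈ U) → φ (Fin.cons v vs) = 0 := by
    intro v hv hcrit vs hvs
    choose c hc using fun i => (Submodule.mem_span_range_iff_exists_fun ℝ).mp (hvs i)
    set F : MultilinearMap ℝ (fun _ : Fin q => V) ℝ := φ.toMultilinearMap.curryLeft v with hF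
    have hFapp : ∀ ws : Fin q → V, F ws = φ (Fin.cons v ws) := fun _ => rfl
    have hvs' : vs = fun i => ∑ k, c i k • e k := by
      funext i; exact (hc i).symm
    rw [← hFapp, hvs', F.map_sum]
    refine Finset.sum_eq_zero fun r _ => ?_
    rw [F.map_smul_univ, hFapp]
    rw [key v hv hcrit r, smul_zero]
  constructor
  · -- criticality → closure
    intro hcrit vs hvs
    have : ρ vs ∈ Uᗮᗮ := by
      rw [Submodule.mem_orthogonal]
      intro u hu
      rw [hρ]
      exact key2 u ((hmemo u).mp hu) (hcrit u ((hmemo u).mp hu)) vs hvs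
    rwa [Submodule.orthogonal_orthogonal] at this
  · -- closure → criticality
    intro hclosed v hv a
    have hmem : ρ (fun i => e (a.succAbove i)) ∈ U :=
      hclosed _ fun i => Submodule.subset_span ⟨_, rfl⟩
    have h1 : φ (Fin.cons v (fun i => e (a.succAbove i))) = 0 := by
      rw [← hρ]
      exact (Submodule.mem_orthogonal' U v).mp ((hmemo v).mpr hv) _ hmem
    have hcomp : (Function.update e a v) ∘ (a.cycleRange.symm : Equiv.Perm (Fin (q + 1))) =
        Fin.cons v (fun i => e (a.succAbove i)) := by
      funext x
      induction x using Fin.cases with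
      | zero =>
        rw [Function.comp_apply, Fin.cycleRange_symm_zero, Function.update_self, Fin.cons_zero]
      | succ x =>
        rw [Function.comp_apply, Fin.cycleRange_symm_succ,
          Function.update_of_ne (Fin.succAbove_ne a x), Fin.cons_succ]
    have h2 := φ.map_perm (Function.update e a v) a.cycleRange.symm
    rw [hcomp, h1] at h2
    rcases Int.units_eq_one_or (Equiv.Perm.sign a.cycleRange.symm) with h | h <;>
      rw [h] at h2 <;> simpa using h2.symm
end

section
/- Let φ ∈ Λ^p V* with associated product ρ defined by ⟨u,ρ(v₂,…,v_p)⟩ = φ(u,v₂,…,v_p). If ξ = e₁∧⋯∧e_p is a critical point of φ on Gr_o(p,V) (with {e_a} orthonormal), then ρ(e₂,…,e_p) = φ(ξ)·e₁. -/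
open scoped RealInnerProductSpace

/-- If `ξ = e₁ ∧ ⋯ ∧ e_p` (orthonormal `e`) is a critical point of `φ` on `Gr_o(p,V)`
(criticality via the First Cousin Principle), then the vector product satisfies
`ρ(e₂,…,e_p) = φ(ξ) • e₁`. -/
theorem rho_of_critical
    {V : Type*} [NormedAddCommGroup V] [InnerProductSpace ℝ V] [FiniteDimensional ℝ V]
    {q : ℕ} (φ : AlternatingMap ℝ V ℝ (Fin (q + 1)))
    (ρ : (Fin q → V) → V)
    (hρ : ∀ (u : V) (vs : Fin q → V), ⟪u, ρ vs⟫ = φ (Fin.cons u vs))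
    (e : Fin (q + 1) → V) (he : Orthonormal ℝ e)
    (hcrit : ∀ v : V, (∀ i, ⟪v, e i⟫ = 0) → ∀ a : Fin (q + 1),
      φ (Function.update e a v) = 0) :
    ρ (fun i => e i.succ) = φ e • e 0 := by
  set vs : Fin q → V := fun i => e i.succ with hvs
  -- cons (e 0) vs = e
  have hcons0 : Fin.cons (e 0) vs = e := by
    funext i
    cases i using Fin.cases <;> simp [hvs]
  -- inner products of e j against ρ vs
  have hinner_e : ∀ j : Fin (q + 1), ⟪e j, ρ vs⟫ = if j = 0 then φ e else 0 := by
    intro j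
    rw [hρ]
    cases j using Fin.cases with
    | zero => simp [hcons0]
    | succ k =>
      rw [if_neg (Fin.succ_ne_zero k)]
      refine φ.map_eq_zero_of_eq _ (i := 0) (j := k.succ) ?_ (Fin.succ_ne_zero k).symm
      simp [hvs]
  apply ext_inner_left ℝ
  intro u
  set c : Fin (q + 1) → ℝ := fun i => ⟪u, e i⟫ with hc
  set u' : V := u - ∑ i, c i • e i with hu'
  have hu'orth : ∀ j, ⟪u', e j⟫ = 0 := by
    intro j
    rw [hu', inner_sub_left, sum_inner]
    have : ∀ i, ⟪c i • e i, e j⟫ = c i * (if i = j then (1:ℝ) else 0) := by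
      intro i
      rw [real_inner_smul_left, orthonormal_iff_ite.mp he i j]
    simp_rw [this]
    simp [hc]
  have hcrit0 : ⟪u', ρ vs⟫ = 0 := by
    rw [hρ]
    have : Fin.cons u' vs = Function.update e 0 u' := by
      funext i
      cases i using Fin.cases with
      | zero => simp
      | succ k => simp [hvs, Function.update_of_ne (Fin.succ_ne_zero k)]
    rw [this]
    exact hcrit u' hu'orth 0
  have hdecomp : u = u' + ∑ i, c i • e i := by rw [hu']; abel
  rw [hdecomp, inner_add_left, inner_add_left, sum_inner, sum_inner, hcrit0,
    real_inner_smul_right, hu'orth 0]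
  simp only [real_inner_smul_left, real_inner_smul_right]
  simp_rw [hinner_e, orthonormal_iff_ite.mp he]
  rw [Finset.sum_eq_single 0, Finset.sum_eq_single 0]
  · simp [mul_comm]
  · intro b _ hb; simp [hb]
  · simp
  · intro b _ hb; simp [hb]
  · simp
end

section
/- Let φ ∈ Λ^p V* with associated (p-1)-fold product ρ. For a unit decomposable p-vector ξ = e₁∧⋯∧e_p, the product ρ vanishes identically on the p-plane [ξ] = span{e₁,…,e_p} (i.e. ρ(v₂,…,v_p)=0 for all v_i ∈ [ξ]) if and only if ξ is a critical point of φ on Gr_o(p,V) and φ(ξ) = 0. -/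
/-! Since `⟪u, ρ vs⟫ = φ (u, vs)`, `ρ` vanishes on `[ξ]` iff `φ (u, v₂, …, v_p) = 0` for every `u`
and all `vᵢ ∈ [ξ]`. By multilinearity and the alternating property it suffices to take the `vᵢ`
to be distinct vectors among `e₁, …, e_p`, i.e. to ask that `φ` vanish whenever one `eₐ` in `ξ` is
replaced by an arbitrary `u`. Splitting `u` along `[ξ] ⊕ [ξ]ᗮ`, the component in `[ξ]` only
contributes a multiple of `φ(ξ)`, and the component in `[ξ]ᗮ` contributes nothing by criticality. -/

open scoped RealInnerProductSpace

open Function Submodule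

theorem Fin.exists_succAbove_comp_perm_of_injective {q : ℕ} {r : Fin q → Fin (q + 1)}
    (hr : Injective r) : ∃ (a : Fin (q + 1)) (σ : Equiv.Perm (Fin q)), r = a.succAbove ∘ σ := by
  have hr_not_surj : ¬Surjective r := fun h => by
    simpa using Fintype.card_le_of_surjective r h
  obtain ⟨a, ha⟩ := not_forall.mp hr_not_surj
  choose τ hτ using fun j => Fin.exists_succAbove_eq fun h => ha ⟨j, h⟩
  have hτ_inj : Injective τ := fun i j hij => hr (by rw [← hτ i, ← hτ j, hij])
  exact ⟨a, Equiv.ofBijective τ (Finite.injective_iff_bijective.mp hτ_inj),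
    funext fun j => (hτ j).symm⟩

theorem MultilinearMap.map_eq_zero_of_forall_mem_span {R ι κ M N : Type*} [CommSemiring R]
    [AddCommMonoid M] [AddCommMonoid N] [Module R M] [Module R N] [Fintype ι] [Fintype κ]
    (f : MultilinearMap R (fun _ : ι => M) N) {e : κ → M} (he : ∀ r : ι → κ, f (e ∘ r) = 0)
    {v : ι → M} (hv : ∀ i, v i ∈ span R (Set.range e)) : f v = 0 := by
  classical
  choose c hc using fun i => (mem_span_range_iff_exists_fun R).mp (hv i)
  obtain rfl : v = fun i => ∑ j, c i j • e j := funext fun i => (hc i).symm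
  rw [f.map_sum]
  refine Finset.sum_eq_zero fun r _ => ?_
  exact (f.map_smul_univ (fun i => c i (r i)) (e ∘ r)).trans (by rw [he, smul_zero])

namespace AlternatingMap

variable {R M N : Type*} [CommSemiring R] [AddCommMonoid M] [AddCommGroup N] [Module R M]
  [Module R N] {q : ℕ}

theorem map_comp_eq_zero_of_forall_removeNth (g : M [⋀^Fin q]→ₗ[R] N) {e : Fin (q + 1) → M}
    (he : ∀ a, g (Fin.removeNth a e) = 0) (r : Fin q → Fin (q + 1)) : g (e ∘ r) = 0 := by
  by_cases hr : Injective r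
  · obtain ⟨a, σ, rfl⟩ := Fin.exists_succAbove_comp_perm_of_injective hr
    exact (g.map_perm (Fin.removeNth a e) σ).trans (by rw [he, smul_zero])
  · exact g.map_eq_zero_of_not_injective _ fun h => hr h.of_comp

theorem map_update_eq_zero_iff (φ : M [⋀^Fin (q + 1)]→ₗ[R] N) (e : Fin (q + 1) → M)
    (a : Fin (q + 1)) (u : M) :
    φ (update e a u) = 0 ↔ φ (Fin.cons u (Fin.removeNth a e)) = 0 := by
  rw [← Fin.insertNth_removeNth, ← Fin.cons_comp_cycleRange, φ.map_perm, smul_eq_zero_iff_eq]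

theorem forall_map_cons_eq_zero_iff (φ : M [⋀^Fin (q + 1)]→ₗ[R] N) (e : Fin (q + 1) → M) :
    (∀ u (v : Fin q → M), (∀ i, v i ∈ span R (Set.range e)) → φ (Fin.cons u v) = 0) ↔
      ∀ a u, φ (update e a u) = 0 := by
  refine ⟨fun h a u => ?_, fun h u v hv => ?_⟩
  · exact (φ.map_update_eq_zero_iff e a u).mpr
      (h u _ fun i => subset_span ⟨a.succAbove i, rfl⟩)
  · refine (φ.curryLeft u).toMultilinearMap.map_eq_zero_of_forall_mem_span
      (map_comp_eq_zero_of_forall_removeNth _ fun a => ?_) hv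
    exact (φ.map_update_eq_zero_iff e a u).mp (h a u)

end AlternatingMap

theorem AlternatingMap.map_update_eq_zero_of_mem_span {R M N ι : Type*} [Semiring R]
    [AddCommMonoid M] [AddCommMonoid N] [Module R M] [Module R N] [DecidableEq ι]
    (φ : M [⋀^ι]→ₗ[R] N) {e : ι → M} (he : φ e = 0) (a : ι) {u : M}
    (hu : u ∈ span R (Set.range e)) : φ (update e a u) = 0 := by
  have hker : span R (Set.range e) ≤ LinearMap.ker (φ.toMultilinearMap.toLinearMap e a) := by
    refine span_le.mpr ?_
    rintro _ ⟨i, rfl⟩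
    rw [SetLike.mem_coe, LinearMap.mem_ker, MultilinearMap.toLinearMap_apply, coe_multilinearMap]
    rcases eq_or_ne i a with rfl | hia
    · rwa [update_eq_self]
    · exact φ.map_eq_zero_of_eq _ (by simp [hia]) hia.symm
  simpa using hker hu

theorem AlternatingMap.forall_map_update_eq_zero_iff {𝕜 E N ι : Type*} [RCLike 𝕜]
    [NormedAddCommGroup E] [InnerProductSpace 𝕜 E] [AddCommGroup N] [Module 𝕜 N] [Finite ι]
    [Nonempty ι] [DecidableEq ι] (φ : E [⋀^ι]→ₗ[𝕜] N) (e : ι → E) :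
    (∀ a u, φ (update e a u) = 0) ↔
      (∀ v, (∀ i, inner 𝕜 v (e i) = 0) → ∀ a, φ (update e a v) = 0) ∧ φ e = 0 := by
  refine ⟨fun h => ⟨fun v _ a => h a v, ?_⟩, fun ⟨hcrit, he⟩ a u => ?_⟩
  · obtain ⟨a⟩ := ‹Nonempty ι›
    simpa using h a (e a)
  set W := span 𝕜 (Set.range e)
  have : FiniteDimensional 𝕜 W := FiniteDimensional.span_of_finite 𝕜 (Set.finite_range e)
  obtain ⟨y, hy, z, hz, rfl⟩ := W.exists_add_mem_mem_orthogonal u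
  have hz_perp : ∀ i, inner 𝕜 z (e i) = 0 :=
    fun i => (W.mem_orthogonal' z).mp hz _ (subset_span ⟨i, rfl⟩)
  rw [φ.map_update_add, φ.map_update_eq_zero_of_mem_span he a hy, hcrit z hz_perp a, add_zero]

theorem rho_vanishes_iff_critical_and_zero_general
    {V : Type*} [NormedAddCommGroup V] [InnerProductSpace ℝ V]
    {q : ℕ} (φ : AlternatingMap ℝ V ℝ (Fin (q + 1)))
    (ρ : (Fin q → V) → V)
    (hρ : ∀ (u : V) (vs : Fin q → V), ⟪u, ρ vs⟫ = φ (Fin.cons u vs))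
    (e : Fin (q + 1) → V) :
    (∀ vs : Fin q → V, (∀ i, vs i ∈ Submodule.span ℝ (Set.range e)) → ρ vs = 0)
    ↔ ((∀ v : V, (∀ i, ⟪v, e i⟫ = 0) → ∀ a : Fin (q + 1),
          φ (Function.update e a v) = 0) ∧ φ e = 0) := by
  have hρ_eq_zero : ∀ vs, ρ vs = 0 ↔ ∀ u, φ (Fin.cons u vs) = 0 := fun vs => by
    simp_rw [← hρ]
    exact ⟨fun h u => by rw [h, inner_zero_right], fun h => inner_self_eq_zero.mp (h _)⟩
  rw [← φ.forall_map_update_eq_zero_iff, ← φ.forall_map_cons_eq_zero_iff]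
  simp_rw [hρ_eq_zero]
  exact ⟨fun h u vs hvs => h vs hvs u, fun h vs hvs u => h u vs hvs⟩

/-- **Corollary (vanishing product).**  Let `ρ` be the `q`-fold vector product associated
to `φ ∈ Λ^{q+1} V*`.  For a unit decomposable `(q+1)`-vector `ξ = e₁ ∧ ⋯ ∧ e_p`, the
product `ρ` vanishes identically on the plane `[ξ] = span{e₁,…,e_p}` if and only if
`ξ` is a critical point of `φ` on `Gr_o(p,V)` (First Cousin Principle) and `φ(ξ) = 0`. -/
theorem rho_vanishes_iff_critical_and_zero
    {V : Type*} [NormedAddCommGroup V] [InnerProductSpace ℝ V] [FiniteDimensional ℝ V]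
    {q : ℕ} (φ : AlternatingMap ℝ V ℝ (Fin (q + 1)))
    (ρ : (Fin q → V) → V)
    (hρ : ∀ (u : V) (vs : Fin q → V), ⟪u, ρ vs⟫ = φ (Fin.cons u vs))
    (e : Fin (q + 1) → V) (he : Orthonormal ℝ e) :
    (∀ vs : Fin q → V, (∀ i, vs i ∈ Submodule.span ℝ (Set.range e)) → ρ vs = 0)
    ↔ ((∀ v : V, (∀ i, ⟪v, e i⟫ = 0) → ∀ a : Fin (q + 1),
          φ (Function.update e a v) = 0) ∧ φ e = 0) :=
  rho_vanishes_iff_critical_and_zero_general φ ρ hρ e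
end

section
/- Let V = Im 𝕆 ≅ ℝ^7 with the associative calibration φ(u,v,w) = ⟨u, v×w⟩ built from the cross product on ℝ^7. A unit decomposable 3-vector ξ = e₁∧e₂∧e₃ is a critical point of φ on Gr_o(3,V) if and only if span{e₁,e₂,e₃} is closed under the 7-dimensional cross product. Moreover, in this case ξ (or its opposite orientation −ξ) is calibrated: φ(ξ) = ±1. -/
/-!
The trilinear form `⟪u × v, w⟫` is alternating, so replacing `eₐ` by a vector `v ⊥ span e` changes
`φ(e)` to `⟪v, eₐ₊₁ × eₐ₊₂⟫`. Criticality therefore says that the cross products of the frame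
vectors have no component orthogonal to `span e`, and bilinearity extends this to the whole span.
In that case `e₁ × e₂` lies in the span and is orthogonal to `e₁` and `e₂`, so it equals
`φ(e) • e₀`; since `‖e₁ × e₂‖ = 1`, `φ(e) = ±1`.
-/

open scoped RealInnerProductSpace

open Submodule Set

section CrossProduct

variable {E : Type*} [NormedAddCommGroup E] [InnerProductSpace ℝ E] {cross : E →ₗ[ℝ] E →ₗ[ℝ] E}

theorem inner_cross_swap_left (h1 : ∀ u v, ⟪cross u v, u⟫ = 0) (x y z : E) :
    ⟪cross x y, z⟫ = -⟪cross z y, x⟫ := by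
  have := h1 (x + z) y
  simp only [map_add, LinearMap.add_apply, inner_add_left, inner_add_right, h1] at this
  linarith

theorem inner_cross_swap_right (h2 : ∀ u v, ⟪cross u v, v⟫ = 0) (x y z : E) :
    ⟪cross x y, z⟫ = -⟪cross x z, y⟫ := by
  have := h2 x (y + z)
  simp only [map_add, inner_add_left, inner_add_right, h2] at this
  linarith

theorem cross_self_eq_zero (h1 : ∀ u v, ⟪cross u v, u⟫ = 0) (h2 : ∀ u v, ⟪cross u v, v⟫ = 0)
    (x : E) : cross x x = 0 :=
  ext_inner_right ℝ fun z => by rw [inner_cross_swap_left h1, h2, neg_zero, inner_zero_left]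

theorem cross_swap (h1 : ∀ u v, ⟪cross u v, u⟫ = 0) (h2 : ∀ u v, ⟪cross u v, v⟫ = 0) (x y : E) :
    cross y x = -cross x y :=
  ext_inner_right ℝ fun z => by
    rw [inner_neg_left, inner_cross_swap_right h2, inner_cross_swap_left h1 y,
      inner_cross_swap_right h2 x, neg_neg]

theorem inner_cross_cyclic (h1 : ∀ u v, ⟪cross u v, u⟫ = 0) (h2 : ∀ u v, ⟪cross u v, v⟫ = 0)
    (x y z : E) : ⟪x, cross y z⟫ = ⟪y, cross z x⟫ := by
  rw [real_inner_comm, inner_cross_swap_right h2, inner_cross_swap_left h1, neg_neg,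
    real_inner_comm]

variable (cross) in
def assocForm (w : Fin 3 → E) : ℝ := ⟪w 0, cross (w 1) (w 2)⟫

theorem assocForm_update (h1 : ∀ u v, ⟪cross u v, u⟫ = 0) (h2 : ∀ u v, ⟪cross u v, v⟫ = 0)
    (e : Fin 3 → E) (a : Fin 3) (v : E) :
    assocForm cross (Function.update e a v) = ⟪v, cross (e (a + 1)) (e (a + 2))⟫ := by
  fin_cases a <;>
    simp [assocForm, Function.update, inner_cross_cyclic h1 h2 (e 0),
      inner_cross_cyclic h1 h2 (e 1)]

variable (cross) in
/-- Criticality of `e₀ ∧ e₁ ∧ e₂` for `φ` on the Grassmannian, in the form of the First Cousin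
Principle. -/
def IsAssocCritical (e : Fin 3 → E) : Prop :=
  ∀ v, (∀ i, ⟪v, e i⟫ = 0) → ∀ a, assocForm cross (Function.update e a v) = 0

end CrossProduct

section Span

variable {E ι : Type*} [NormedAddCommGroup E] [InnerProductSpace ℝ E]

theorem mem_orthogonal_span_range_iff (e : ι → E) (v : E) :
    v ∈ (span ℝ (range e))ᗮ ↔ ∀ i, ⟪v, e i⟫ = 0 := by
  rw [← span_singleton_le_iff_mem, ← isOrtho_iff_le, isOrtho_span]
  simp

theorem mem_span_range_iff_forall_inner_eq_zero [Finite ι] (e : ι → E) (x : E) :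
    x ∈ span ℝ (range e) ↔ ∀ v, (∀ i, ⟪v, e i⟫ = 0) → ⟪v, x⟫ = 0 := by
  have := FiniteDimensional.span_of_finite ℝ (finite_range e)
  conv_lhs => rw [← orthogonal_orthogonal (span ℝ (range e)), mem_orthogonal]
  simp only [mem_orthogonal_span_range_iff]

theorem Orthonormal.eq_inner_smul_of_mem_span {e : ι → E} (he : Orthonormal ℝ e)
    {x : E} (hx : x ∈ span ℝ (range e)) (i₀ : ι) (h : ∀ i, i ≠ i₀ → ⟪e i, x⟫ = 0) :
    x = ⟪e i₀, x⟫ • e i₀ := by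
  classical
  have hW : x - ⟪e i₀, x⟫ • e i₀ ∈ span ℝ (range e) :=
    sub_mem hx (smul_mem _ _ (subset_span (mem_range_self i₀)))
  have hWperp : x - ⟪e i₀, x⟫ • e i₀ ∈ (span ℝ (range e))ᗮ := by
    rw [mem_orthogonal_span_range_iff]
    intro i
    rw [real_inner_comm, inner_sub_right, real_inner_smul_right, orthonormal_iff_ite.mp he]
    by_cases hi : i = i₀
    · subst hi; simp
    · simp [hi, h i hi]
  exact sub_eq_zero.mp (inner_self_eq_zero.mp (inner_right_of_mem_orthogonal hW hWperp))

end Span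

section Criticality

variable {E : Type*} [NormedAddCommGroup E] [InnerProductSpace ℝ E] {cross : E →ₗ[ℝ] E →ₗ[ℝ] E}
  (h1 : ∀ u v, ⟪cross u v, u⟫ = 0) (h2 : ∀ u v, ⟪cross u v, v⟫ = 0)
include h1 h2

theorem isAssocCritical_iff_cross_mem_span (e : Fin 3 → E) :
    IsAssocCritical cross e ↔ ∀ a : Fin 3, cross (e (a + 1)) (e (a + 2)) ∈ span ℝ (range e) := by
  simp only [IsAssocCritical, assocForm_update h1 h2, mem_span_range_iff_forall_inner_eq_zero]
  exact ⟨fun h a v hv => h v hv a, fun h v hv a => h a v hv⟩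

theorem cross_mem_span_iff_cross_mem_span_cyclic (e : Fin 3 → E) :
    (∀ x y, x ∈ span ℝ (range e) → y ∈ span ℝ (range e) → cross x y ∈ span ℝ (range e)) ↔
      ∀ a : Fin 3, cross (e (a + 1)) (e (a + 2)) ∈ span ℝ (range e) := by
  refine ⟨fun h a => h _ _ (subset_span (mem_range_self _)) (subset_span (mem_range_self _)),
    fun h x y hx hy => map₂_le.mp ?_ x hx y hy⟩
  rw [map₂_span_span, span_le, image2_subset_iff]
  rintro _ ⟨i, rfl⟩ _ ⟨j, rfl⟩
  obtain rfl | ⟨a, ⟨rfl, rfl⟩ | ⟨rfl, rfl⟩⟩ :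
      j = i ∨ ∃ a : Fin 3, (i = a + 1 ∧ j = a + 2) ∨ (j = a + 1 ∧ i = a + 2) := by
    revert i j; decide
  · rw [cross_self_eq_zero h1 h2]
    exact zero_mem _
  · exact h a
  · rw [cross_swap h1 h2]
    exact neg_mem (h a)

theorem inner_cross_eq_one_or_eq_neg_one
    (h3 : ∀ u v, ‖cross u v‖ ^ 2 = ‖u‖ ^ 2 * ‖v‖ ^ 2 - ⟪u, v⟫ ^ 2) {e : Fin 3 → E}
    (he : Orthonormal ℝ e) (hc : cross (e 1) (e 2) ∈ span ℝ (range e)) :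
    ⟪e 0, cross (e 1) (e 2)⟫ = 1 ∨ ⟪e 0, cross (e 1) (e 2)⟫ = -1 := by
  have hc₀ : cross (e 1) (e 2) = ⟪e 0, cross (e 1) (e 2)⟫ • e 0 :=
    he.eq_inner_smul_of_mem_span hc 0 fun i hi => by
      obtain rfl | rfl : i = 1 ∨ i = 2 := by fin_cases i <;> simp_all
      · rw [real_inner_comm, h1]
      · rw [real_inner_comm, h2]
  have hnorm := h3 (e 1) (e 2)
  rw [he.1 1, he.1 2, he.inner_eq_zero (by decide), hc₀, norm_smul, he.1 0, Real.norm_eq_abs,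
    mul_one, sq_abs] at hnorm
  exact sq_eq_one_iff.mp (by linarith)

end Criticality

/-- **Associative calibration.**  Let `V = Im 𝕆 ≅ ℝ⁷` with its cross product
(bilinear, with `⟪u × v, u⟫ = 0`, `⟪u × v, v⟫ = 0`, `‖u × v‖² = ‖u‖²‖v‖² - ⟪u,v⟫²`),
and let `φ(u,v,w) = ⟪u, v × w⟫` be the associative `3`-form.  A unit decomposable
`3`-vector `ξ = e₁ ∧ e₂ ∧ e₃` is a critical point of `φ` on `Gr_o(3,V)` (First Cousin
Principle) if and only if `span{e₁,e₂,e₃}` is closed under the cross product; moreover,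
in that case `ξ` or `-ξ` is calibrated: `φ(ξ) = ±1`. -/
theorem associative_critical_iff_cross_closed
    (cross : EuclideanSpace ℝ (Fin 7) →ₗ[ℝ] EuclideanSpace ℝ (Fin 7) →ₗ[ℝ]
      EuclideanSpace ℝ (Fin 7))
    (h1 : ∀ u v : EuclideanSpace ℝ (Fin 7), ⟪cross u v, u⟫ = 0)
    (h2 : ∀ u v : EuclideanSpace ℝ (Fin 7), ⟪cross u v, v⟫ = 0)
    (h3 : ∀ u v : EuclideanSpace ℝ (Fin 7),
      ‖cross u v‖ ^ 2 = ‖u‖ ^ 2 * ‖v‖ ^ 2 - ⟪u, v⟫ ^ 2)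
    (e : Fin 3 → EuclideanSpace ℝ (Fin 7)) (he : Orthonormal ℝ e) :
    ((∀ v : EuclideanSpace ℝ (Fin 7), (∀ i, ⟪v, e i⟫ = 0) → ∀ a : Fin 3,
        (fun w : Fin 3 → EuclideanSpace ℝ (Fin 7) => ⟪w 0, cross (w 1) (w 2)⟫)
          (Function.update e a v) = 0)
      ↔ (∀ x y : EuclideanSpace ℝ (Fin 7),
          x ∈ Submodule.span ℝ (Set.range e) → y ∈ Submodule.span ℝ (Set.range e) →
          cross x y ∈ Submodule.span ℝ (Set.range e)))
    ∧
    ((∀ v : EuclideanSpace ℝ (Fin 7), (∀ i, ⟪v, e i⟫ = 0) → ∀ a : Fin 3,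
        (fun w : Fin 3 → EuclideanSpace ℝ (Fin 7) => ⟪w 0, cross (w 1) (w 2)⟫)
          (Function.update e a v) = 0) →
      ⟪e 0, cross (e 1) (e 2)⟫ = 1 ∨ ⟪e 0, cross (e 1) (e 2)⟫ = -1) := by
  have hcrit := isAssocCritical_iff_cross_mem_span h1 h2 e
  refine ⟨hcrit.trans (cross_mem_span_iff_cross_mem_span_cyclic h1 h2 e).symm, fun hc => ?_⟩
  exact inner_cross_eq_one_or_eq_neg_one h1 h2 h3 he (by simpa using hcrit.mp hc 0)
end

section
/- Let φ ∈ Λ^p V* be a calibration (max of φ on Gr_o(p,V) equals 1) on a Euclidean vector space V, and suppose ξ = e₁∧⋯∧e_p is a critical point of φ on Gr_o(p,V) with φ(ξ) = φ₀ ≠ 0. If h^s_{ab} (p < s ≤ n, 1 ≤ a,b ≤ p) are real numbers symmetric in a,b satisfying φ₀ h^s_{ac} = Σ_{b,t} φ^{ab}_{st} h^t_{bc} for all a,c,s, where φ^{ab}_{st} denotes the coefficient of φ obtained from φ(e₁,…,e_p) by replacing e_a with e_s and e_b with e_t (zero if a = b), then Σ_a h^s_{aa} = 0 for every s. -/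
open scoped RealInnerProductSpace

open Function in
theorem AlternatingMap.map_update_update_swap {R M N ι : Type*} [CommSemiring R]
    [AddCommMonoid M] [Module R M] [AddCommGroup N] [Module R N] [DecidableEq ι]
    (f : M [⋀^ι]→ₗ[R] N) (v : ι → M) {i j : ι} (hij : i ≠ j) (x y : M) :
    f (update (update v j x) i y) = -f (update (update v i x) j y) := by
  have hswap : update (update v j x) i y = update (update v i x) j y ∘ Equiv.swap i j := by
    ext k
    rcases eq_or_ne k i with rfl | hki
    · simp
    rcases eq_or_ne k j with rfl | hkj
    · simp [hki, hij]
    · simp [Equiv.swap_apply_of_ne_of_ne hki hkj, hki, hkj]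
  rw [hswap, f.map_swap _ hij]

theorem Finset.sum_sum_eq_zero_of_antisymm {ι M : Type*} [AddCommGroup M] [IsAddTorsionFree M]
    (s : Finset ι) (F : ι → ι → M) (hF : ∀ a b, F b a = -F a b) :
    ∑ a ∈ s, ∑ b ∈ s, F a b = 0 := by
  refine self_eq_neg.mp ?_
  calc ∑ a ∈ s, ∑ b ∈ s, F a b = ∑ a ∈ s, ∑ b ∈ s, F b a := Finset.sum_comm
    _ = -∑ a ∈ s, ∑ b ∈ s, F a b := by
      simp only [← Finset.sum_neg_distrib]
      exact Finset.sum_congr rfl fun a _ => Finset.sum_congr rfl fun b _ => hF a b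

theorem trace_of_second_fundamental_form_vanishes_general
    {V : Type*} [NormedAddCommGroup V] [InnerProductSpace ℝ V]
    {p q : ℕ} (φ : AlternatingMap ℝ V ℝ (Fin p))
    (e : Fin p → V) (f : Fin q → V)
    (hφ₀ : φ e ≠ 0)
    (h : Fin q → Fin p → Fin p → ℝ)
    (hsym : ∀ s a b, h s a b = h s b a)
    (hrel : ∀ (a c : Fin p) (s : Fin q),
      φ e * h s a c =
        ∑ b : Fin p, ∑ t : Fin q,
          (if a = b then 0
            else φ (Function.update (Function.update e a (f s)) b (f t))) * h t b c) :
    ∀ s : Fin q, ∑ a : Fin p, h s a a = 0 := by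
  intro s
  -- Contracting `hrel` over `a = c` gives a double sum over `(a, b)` whose summand is
  -- antisymmetric, since `φ` is alternating and `h` is symmetric.
  have hantisymm : ∀ a b : Fin p,
      ∑ t : Fin q, (if b = a then 0
        else φ (Function.update (Function.update e b (f s)) a (f t))) * h t a b =
      -∑ t : Fin q, (if a = b then 0
        else φ (Function.update (Function.update e a (f s)) b (f t))) * h t b a := by
    intro a b
    rcases eq_or_ne a b with rfl | hab
    · simp
    · simp only [if_neg hab, if_neg hab.symm, φ.map_update_update_swap e hab,
        ← Finset.sum_neg_distrib]
      exact Finset.sum_congr rfl fun t _ => by rw [hsym t a b, neg_mul]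
  refine (mul_eq_zero.mp ?_).resolve_left hφ₀
  calc φ e * ∑ a, h s a a
      = ∑ a, ∑ b, ∑ t, (if a = b then 0
          else φ (Function.update (Function.update e a (f s)) b (f t))) * h t b a := by
        rw [Finset.mul_sum]
        exact Finset.sum_congr rfl fun a _ => hrel a a s
    _ = 0 := Finset.sum_sum_eq_zero_of_antisymm _ _ hantisymm

/-- The algebraic core of the proof that `φ`-critical submanifolds with nonzero critical
value are minimal.  Let `φ ∈ Λ^p V*` be a calibration, `e : Fin p → V` together with
`f : Fin q → V` a joint orthonormal family, `ξ = e₁ ∧ ⋯ ∧ e_p` critical with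
`φ₀ = φ(ξ) ≠ 0`.  Writing `φ^{ab}_{st}` for the coefficient obtained from `φ(e₁,…,e_p)`
by replacing `e_a` with `f_s` and `e_b` with `f_t` (zero if `a = b`), if the numbers
`h^s_{ab}` are symmetric in `a, b` and satisfy
`φ₀ h^s_{ac} = ∑_{b,t} φ^{ab}_{st} h^t_{bc}`, then `∑_a h^s_{aa} = 0` for every `s`. -/
theorem trace_of_second_fundamental_form_vanishes
    {V : Type*} [NormedAddCommGroup V] [InnerProductSpace ℝ V] [FiniteDimensional ℝ V]
    {p q : ℕ} (φ : AlternatingMap ℝ V ℝ (Fin p))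
    (e : Fin p → V) (f : Fin q → V)
    (hon : Orthonormal ℝ (Sum.elim e f))
    (hcal : ∀ g : Fin p → V, Orthonormal ℝ g → φ g ≤ 1)
    (hcrit : ∀ v : V, (∀ i, ⟪v, e i⟫ = 0) → ∀ a : Fin p,
      φ (Function.update e a v) = 0)
    (hφ₀ : φ e ≠ 0)
    (h : Fin q → Fin p → Fin p → ℝ)
    (hsym : ∀ s a b, h s a b = h s b a)
    (hrel : ∀ (a c : Fin p) (s : Fin q),
      φ e * h s a c =
        ∑ b : Fin p, ∑ t : Fin q,
          (if a = b then 0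
            else φ (Function.update (Function.update e a (f s)) b (f t))) * h t b c) :
    ∀ s : Fin q, ∑ a : Fin p, h s a a = 0 :=
  trace_of_second_fundamental_form_vanishes_general φ e f hφ₀ h hsym hrel
end

section
/- Let φ ∈ Λ^p V* on an n-dimensional real inner product space V, and let *φ ∈ Λ^{n-p} V* be its Hodge dual. Then a unit decomposable p-vector ξ ∈ Gr_o(p,V) is a critical point of φ on Gr_o(p,V) if and only if a (suitably oriented) unit decomposable (n-p)-vector ξ^⊥ spanning the orthogonal complement of [ξ] is a critical point of *φ on Gr_o(n-p,V). -/
open scoped RealInnerProductSpace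
open Function

/-! Complete `ξ = e₁ ∧ ⋯ ∧ e_p` to the oriented orthonormal basis `e`. By multilinearity, `ξ` is
critical for `φ` iff `φ` vanishes on every cross replacement of some `e_a` (`a ≤ p`) by some
`e_c` (`c > p`), and likewise `ξ^⊥` is critical for `ψ` iff `ψ` vanishes on every replacement
of some `e_c` by some `e_a`. Swapping `e_a` with `e_c` and negating one of them gives again a
positively oriented orthonormal basis, on which the defining identity of `ψ = *φ` says that
these two cross values are opposite. -/

section

variable {V M : Type*} [NormedAddCommGroup V] [InnerProductSpace ℝ V] [AddCommGroup M] [Module ℝ M]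

namespace AlternatingMap

/-- The First Cousin Principle: `u₁ ∧ ⋯ ∧ u_p` is a critical point of `f` on the oriented
Grassmannian iff `f` vanishes whenever one `u_a` is replaced by a vector orthogonal to all `u_i`. -/
def IsCriticalFrame {ι : Type*} [DecidableEq ι] (f : V [⋀^ι]→ₗ[ℝ] M) (u : ι → V) : Prop :=
  ∀ v : V, (∀ i, ⟪v, u i⟫ = 0) → ∀ a, f (update u a v) = 0

theorem map_update_eq_sum_inner {ι κ : Type*} [DecidableEq ι] [Fintype κ]
    (B : OrthonormalBasis κ ℝ V) (f : V [⋀^ι]→ₗ[ℝ] M) (m : ι → V) (a : ι) (v : V) :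
    f (update m a v) = ∑ k, ⟪B k, v⟫ • f (update m a (B k)) := by
  conv_lhs => rw [← B.sum_repr' v]
  simp only [map_update_sum, map_update_smul]

theorem isCriticalFrame_iff {ι ι' κ : Type*} [DecidableEq ι] [Fintype κ]
    (B : OrthonormalBasis κ ℝ V) {σ : ι → κ} {τ : ι' → κ}
    (hcover : ∀ k, (∃ i, σ i = k) ∨ ∃ c, τ c = k) (hdisj : ∀ i c, σ i ≠ τ c)
    (f : V [⋀^ι]→ₗ[ℝ] M) :
    f.IsCriticalFrame (fun i => B (σ i)) ↔
      ∀ a c, f (update (fun i => B (σ i)) a (B (τ c))) = 0 := by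
  constructor
  · intro hf a c
    refine hf _ (fun i => ?_) a
    rw [B.orthonormal.inner_eq_zero (hdisj i c).symm]
  · intro hf v hv a
    rw [map_update_eq_sum_inner B]
    refine Finset.sum_eq_zero fun k _ => ?_
    obtain ⟨i, rfl⟩ | ⟨c, rfl⟩ := hcover k
    · rw [real_inner_comm, hv i, zero_smul]
    · rw [hf a c, smul_zero]

end AlternatingMap

theorem Fin.castAdd_ne_natAdd {p q : ℕ} (i : Fin p) (c : Fin q) :
    Fin.castAdd q i ≠ Fin.natAdd p c := by
  intro h
  have := congrArg Fin.val h
  simp only [Fin.val_castAdd, Fin.val_natAdd] at this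
  omega

theorem Fin.exists_castAdd_or_natAdd {p q : ℕ} (k : Fin (p + q)) :
    (∃ i, Fin.castAdd q i = k) ∨ ∃ c, Fin.natAdd p c = k :=
  Fin.addCases (fun i => Or.inl ⟨i, rfl⟩) (fun c => Or.inr ⟨c, rfl⟩) k

theorem map_update_cross_eq_neg_of_hodgeDual {p q : ℕ}
    (Ω : AlternatingMap ℝ V ℝ (Fin (p + q)))
    (φ : AlternatingMap ℝ V ℝ (Fin p)) (ψ : AlternatingMap ℝ V ℝ (Fin q))
    (hψ : ∀ u : Fin (p + q) → V, Orthonormal ℝ u → 0 < Ω u →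
      ψ (fun i => u (Fin.natAdd p i)) = φ (fun i => u (Fin.castAdd q i)))
    {e : Fin (p + q) → V} (he : Orthonormal ℝ e) (hor : 0 < Ω e) (a : Fin p) (c : Fin q) :
    φ (update (fun i => e (Fin.castAdd q i)) a (e (Fin.natAdd p c)))
      = -ψ (update (fun i => e (Fin.natAdd p i)) c (e (Fin.castAdd q a))) := by
  have hne := Fin.castAdd_ne_natAdd a c
  set ca := Fin.castAdd q a
  set nc := Fin.natAdd p c
  set u := update (e ∘ Equiv.swap ca nc) nc (-(e ∘ Equiv.swap ca nc) nc)
  have hu : Orthonormal ℝ u := by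
    refine (he.comp _ (Equiv.swap ca nc).injective).orthonormal_of_forall_eq_or_eq_neg fun k => ?_
    by_cases hk : k = nc
    · subst hk; exact Or.inr (by simp [u])
    · exact Or.inl (by simp [u, hk])
  have hΩu : Ω u = Ω e := by
    rw [AlternatingMap.map_update_neg, update_eq_self, Ω.map_swap e hne, neg_neg]
  have hfirst :
      (fun i => u (Fin.castAdd q i)) = update (fun i => e (Fin.castAdd q i)) a (e nc) := by
    funext i
    have hi : Fin.castAdd q i ≠ nc := Fin.castAdd_ne_natAdd i c
    by_cases hia : i = a
    · subst hia; simp [u, ca, hi]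
    · have hica : Fin.castAdd q i ≠ ca := fun h => hia (Fin.castAdd_injective _ _ h)
      simp [u, hi, hia, Equiv.swap_apply_of_ne_of_ne hica hi]
  have hlast :
      (fun i => u (Fin.natAdd p i)) = update (fun i => e (Fin.natAdd p i)) c (-e ca) := by
    funext i
    have hi : Fin.natAdd p i ≠ ca := (Fin.castAdd_ne_natAdd a i).symm
    by_cases hic : i = c
    · subst hic; simp [u, nc, ca]
    · have hinc : Fin.natAdd p i ≠ nc := fun h => hic (Fin.natAdd_injective _ _ h)
      simp [u, hic, hinc, Equiv.swap_apply_of_ne_of_ne hi hinc]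
  have hdual := hψ u hu (hΩu ▸ hor)
  rw [hfirst, hlast, AlternatingMap.map_update_neg] at hdual
  exact hdual.symm

end

theorem critical_iff_hodge_dual_critical_general
    {V : Type*} [NormedAddCommGroup V] [InnerProductSpace ℝ V] [FiniteDimensional ℝ V]
    {p q : ℕ} (hdim : Module.finrank ℝ V = p + q)
    (Ω : AlternatingMap ℝ V ℝ (Fin (p + q)))
    (φ : AlternatingMap ℝ V ℝ (Fin p)) (ψ : AlternatingMap ℝ V ℝ (Fin q))
    (hψ : ∀ u : Fin (p + q) → V, Orthonormal ℝ u → 0 < Ω u →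
      ψ (fun i => u (Fin.natAdd p i)) = φ (fun i => u (Fin.castAdd q i)))
    (e : Fin (p + q) → V) (he : Orthonormal ℝ e) (hor : 0 < Ω e) :
    (∀ v : V, (∀ i : Fin p, ⟪v, e (Fin.castAdd q i)⟫ = 0) → ∀ a : Fin p,
      φ (Function.update (fun i : Fin p => e (Fin.castAdd q i)) a v) = 0)
    ↔ (∀ v : V, (∀ i : Fin q, ⟪v, e (Fin.natAdd p i)⟫ = 0) → ∀ a : Fin q,
        ψ (Function.update (fun i : Fin q => e (Fin.natAdd p i)) a v) = 0) := by
  let B : OrthonormalBasis (Fin (p + q)) ℝ V := .mk he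
    (he.linearIndependent.span_eq_top_of_card_eq_finrank' (by simp [hdim])).ge
  have hB : ⇑B = e := OrthonormalBasis.coe_mk he _
  change φ.IsCriticalFrame (fun i => e (Fin.castAdd q i)) ↔
    ψ.IsCriticalFrame (fun i => e (Fin.natAdd p i))
  rw [← hB, AlternatingMap.isCriticalFrame_iff B Fin.exists_castAdd_or_natAdd
      Fin.castAdd_ne_natAdd,
    AlternatingMap.isCriticalFrame_iff B (fun k => (Fin.exists_castAdd_or_natAdd k).symm)
      (fun c i => (Fin.castAdd_ne_natAdd i c).symm), hB, forall_comm]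
  simp only [map_update_cross_eq_neg_of_hodgeDual Ω φ ψ hψ he hor, neg_eq_zero]

/-- **Hodge duality of criticality.**  Let `V` be an oriented `(p+q)`-dimensional real inner
product space, with orientation given by a nonzero top form `Ω`.  Let `φ ∈ Λ^p V*` and let
`ψ = *φ ∈ Λ^q V*` be its Hodge dual, characterized by
`ψ(u_{p+1},…,u_{p+q}) = φ(u₁,…,u_p)` for every positively oriented orthonormal basis
`u₁,…,u_{p+q}` of `V`.  Given an orthonormal basis `e₁,…,e_{p+q}` (positively oriented), the
unit decomposable `p`-vector `ξ = e₁ ∧ ⋯ ∧ e_p` is a critical point of `φ` on `Gr_o(p,V)`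
(First Cousin Principle) if and only if the complementary unit decomposable `q`-vector
`ξ^⊥ = e_{p+1} ∧ ⋯ ∧ e_{p+q}` is a critical point of `*φ` on `Gr_o(q,V)`. -/
theorem critical_iff_hodge_dual_critical
    {V : Type*} [NormedAddCommGroup V] [InnerProductSpace ℝ V] [FiniteDimensional ℝ V]
    {p q : ℕ} (hdim : Module.finrank ℝ V = p + q)
    (Ω : AlternatingMap ℝ V ℝ (Fin (p + q))) (hΩ : Ω ≠ 0)
    (φ : AlternatingMap ℝ V ℝ (Fin p)) (ψ : AlternatingMap ℝ V ℝ (Fin q))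
    (hψ : ∀ u : Fin (p + q) → V, Orthonormal ℝ u → 0 < Ω u →
      ψ (fun i => u (Fin.natAdd p i)) = φ (fun i => u (Fin.castAdd q i)))
    (e : Fin (p + q) → V) (he : Orthonormal ℝ e) (hor : 0 < Ω e) :
    (∀ v : V, (∀ i : Fin p, ⟪v, e (Fin.castAdd q i)⟫ = 0) → ∀ a : Fin p,
      φ (Function.update (fun i : Fin p => e (Fin.castAdd q i)) a v) = 0)
    ↔ (∀ v : V, (∀ i : Fin q, ⟪v, e (Fin.natAdd p i)⟫ = 0) → ∀ a : Fin q,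
        ψ (Function.update (fun i : Fin q => e (Fin.natAdd p i)) a v) = 0) :=
  critical_iff_hodge_dual_critical_general hdim Ω φ ψ hψ e he hor
end

section
/- Let φ ∈ Λ^p V*, and suppose ξ = e₁∧⋯∧e_p is a critical point of φ on Gr_o(p,V) with φ(ξ) ≠ 0. Then for any unit vector v orthogonal to [ξ] and any 1 ≤ a ≤ p, replacing e_a by v yields a p-plane ζ = e₁∧⋯∧e_{a-1}∧v∧e_{a+1}∧⋯∧e_p with the property that ρ(e₁,…,ê_a,…,e_p) ≠ 0 is orthogonal to v, where ρ is the vector product of φ; consequently ζ ≠ ±ξ and φ(ζ) = 0. -/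
open scoped RealInnerProductSpace

/-- **Polar space computation.**  Suppose `ξ = e₁ ∧ ⋯ ∧ e_p` (orthonormal `e`) is a critical
point of `φ` on `Gr_o(p,V)` (First Cousin Principle) with `φ(ξ) ≠ 0`.  Then for any unit
vector `v` orthogonal to `[ξ]` and any index `a`, the plane
`ζ = e₁ ∧ ⋯ ∧ e_{a-1} ∧ v ∧ e_{a+1} ∧ ⋯ ∧ e_p` obtained by replacing `e_a` with `v`
satisfies: `ρ(e₁,…,ê_a,…,e_p) ≠ 0` and is orthogonal to `v` (where `ρ` is the vector
product of `φ`); consequently `ζ ≠ ±ξ` (their spans differ) and `φ(ζ) = 0`. -/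
theorem polar_space_computation
    {V : Type*} [NormedAddCommGroup V] [InnerProductSpace ℝ V] [FiniteDimensional ℝ V]
    {q : ℕ} (φ : AlternatingMap ℝ V ℝ (Fin (q + 1)))
    (ρ : (Fin q → V) → V)
    (hρ : ∀ (u : V) (vs : Fin q → V), ⟪u, ρ vs⟫ = φ (Fin.cons u vs))
    (e : Fin (q + 1) → V) (he : Orthonormal ℝ e)
    (hcrit : ∀ w : V, (∀ i, ⟪w, e i⟫ = 0) → ∀ a : Fin (q + 1),
      φ (Function.update e a w) = 0)
    (hval : φ e ≠ 0)
    (v : V) (hv : ‖v‖ = 1) (hvperp : ∀ i, ⟪v, e i⟫ = 0) (a : Fin (q + 1)) :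
    ρ (fun i => e (a.succAbove i)) ≠ 0
    ∧ ⟪v, ρ (fun i => e (a.succAbove i))⟫ = 0
    ∧ Submodule.span ℝ (Set.range (Function.update e a v)) ≠
        Submodule.span ℝ (Set.range e)
    ∧ φ (Function.update e a v) = 0 := by
  set t : Fin q → V := fun i => e (a.succAbove i) with ht
  -- key sign relation
  have key : ∀ u : V, φ (Fin.cons u t) = ((-1 : ℝ) ^ (a : ℕ)) * φ (Function.update e a u) := by
    intro u
    have hcomp : (Function.update e a u) ∘ ⇑(a.cycleRange⁻¹) = Fin.cons u t := by
      funext j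
      refine Fin.cases ?_ ?_ j
      · simp only [Function.comp_apply]
        rw [Equiv.Perm.inv_def, Fin.cycleRange_symm_zero]
        simp
      · intro i
        simp only [Function.comp_apply]
        rw [Equiv.Perm.inv_def, Fin.cycleRange_symm_succ]
        simp [Function.update_of_ne (Fin.succAbove_ne a i), ht]
    rw [← hcomp, AlternatingMap.map_perm, map_inv, Fin.sign_cycleRange]
    simp [Units.smul_def]
  have hcrit4 : φ (Function.update e a v) = 0 := hcrit v hvperp a
  have hinner2 : ⟪v, ρ t⟫ = 0 := by
    rw [hρ, key, hcrit4, mul_zero]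
  have hupdate_self : Function.update e a (e a) = e := by
    funext j; by_cases h : j = a <;> simp [h]
  have hne : ρ t ≠ 0 := by
    intro h0
    have : ⟪e a, ρ t⟫ = ((-1 : ℝ) ^ (a : ℕ)) * φ e := by
      rw [hρ, key, hupdate_self]
    rw [h0, inner_zero_right] at this
    exact hval (by
      have := this.symm
      rcases mul_eq_zero.mp this with h | h
      · exact absurd h (by positivity)
      · exact h)
  have hv0 : v ≠ 0 := by
    intro h; rw [h, norm_zero] at hv; norm_num at hv
  refine ⟨hne, hinner2, ?_, hcrit4⟩
  intro hspan
  have hvmem : v ∈ Submodule.span ℝ (Set.range (Function.update e a v)) :=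
    Submodule.subset_span ⟨a, by simp⟩
  rw [hspan] at hvmem
  have hperp : v ∈ (Submodule.span ℝ (Set.range e))ᗮ := by
    rw [Submodule.mem_orthogonal']
    intro u hu
    induction hu using Submodule.span_induction with
    | mem x hx => rcases hx with ⟨i, rfl⟩; exact hvperp i
    | zero => simp
    | add x y _ _ hx hy => rw [inner_add_right, hx, hy, add_zero]
    | smul c x _ hx => rw [inner_smul_right, hx, mul_zero]
  have hvv : ⟪v, v⟫ = 0 := (Submodule.mem_orthogonal' _ v).mp hperp v hvmem
  exact hv0 (inner_self_eq_zero.mp hvv)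
end

section
/- Let V = ℂ^m regarded as a real inner product space of dimension 2m, with symplectic form σ = Σ dx^j ∧ dy^j and holomorphic volume form Υ = dz¹∧⋯∧dz^m. If ξ ∈ Gr_o(m,V) is a unit decomposable m-vector such that the m-plane [ξ] is Lagrangian (σ|_{[ξ]} = 0) and Im Υ vanishes on ξ, then |φ(ξ)| = 1 where φ = Re Υ; i.e., ξ or −ξ is special Lagrangian calibrated. -/
/-!
On a Lagrangian plane the Hermitian inner product is real, so a family orthonormal for its real
part is orthonormal over `ℂ`. The matrix with these columns is then unitary, its determinant has
modulus one, and a real number of modulus one is `±1`.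
-/

open Matrix

theorem Orthonormal.of_re_inner_of_im_inner_eq_zero {E ι : Type*} [SeminormedAddCommGroup E]
    [InnerProductSpace ℂ E] [DecidableEq ι] {v : ι → E}
    (hre : ∀ i j, (inner ℂ (v i) (v j) : ℂ).re = if i = j then (1 : ℝ) else 0)
    (him : ∀ i j, (inner ℂ (v i) (v j) : ℂ).im = 0) : Orthonormal ℂ v := by
  refine orthonormal_iff_ite.mpr fun i j => Complex.ext ?_ ?_
  · rw [hre]; split_ifs <;> simp
  · rw [him]; split_ifs <;> simp

theorem Matrix.conjTranspose_mul_self_of_orthonormal_cols {𝕜 n ι : Type*} [RCLike 𝕜]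
    [Fintype n] [DecidableEq ι] {v : ι → EuclideanSpace 𝕜 n} (hv : Orthonormal 𝕜 v) :
    (of fun i j => v j i)ᴴ * of (fun i j => v j i) = 1 := by
  ext i j
  simpa [mul_apply, PiLp.inner_apply, one_apply, mul_comm] using
    orthonormal_iff_ite.mp hv i j

theorem Complex.re_eq_one_or_neg_one_of_norm_eq_one {z : ℂ} (hz : ‖z‖ = 1) (him : z.im = 0) :
    z.re = 1 ∨ z.re = -1 :=
  abs_eq zero_le_one |>.mp <| (abs_re_eq_norm.mpr him).trans hz

/-- **Special Lagrangian planes.**  Let `V = ℂᵐ` viewed as a real inner product space of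
dimension `2m`, with symplectic form `σ(u,v) = Im⟪u,v⟫_ℂ` and holomorphic volume form
`Υ(v₁,…,v_m) = det[v_jⁱ]`.  If `ξ = e₁ ∧ ⋯ ∧ e_m` is a unit decomposable `m`-vector (the
`e_j` orthonormal for the real inner product `Re⟪·,·⟫_ℂ`) whose plane is Lagrangian
(`σ` vanishes on it) and on which `Im Υ` vanishes, then `|Re Υ(ξ)| = 1`, i.e. `ξ` or `-ξ`
is calibrated by the special Lagrangian calibration `φ = Re Υ`. -/
theorem lagrangian_with_imaginary_part_zero_is_special
    {m : ℕ} (e : Fin m → EuclideanSpace ℂ (Fin m))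
    (hon : ∀ i j, (inner ℂ (e i) (e j) : ℂ).re = if i = j then (1 : ℝ) else 0)
    (hlag : ∀ x y : EuclideanSpace ℂ (Fin m),
      x ∈ Submodule.span ℝ (Set.range e) → y ∈ Submodule.span ℝ (Set.range e) →
      (inner ℂ x y : ℂ).im = 0)
    (him : (Matrix.det (Matrix.of fun i j => e j i)).im = 0) :
    (Matrix.det (Matrix.of fun i j => e j i)).re = 1 ∨
      (Matrix.det (Matrix.of fun i j => e j i)).re = -1 := by
  have horth : Orthonormal ℂ e := .of_re_inner_of_im_inner_eq_zero hon fun i j =>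
    hlag _ _ (Submodule.subset_span ⟨i, rfl⟩) (Submodule.subset_span ⟨j, rfl⟩)
  have hunitary : of (fun i j => e j i) ∈ unitaryGroup (Fin m) ℂ :=
    mem_unitaryGroup_iff'.mpr (conjTranspose_mul_self_of_orthonormal_cols horth)
  exact Complex.re_eq_one_or_neg_one_of_norm_eq_one
    (CStarRing.norm_of_mem_unitary (det_of_mem_unitary hunitary)) him
end
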